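/- Let n, m, r be positive integers with r ≥ 2, and let H be an r-uniform multi-hypergraph with n vertices and m edges. Let X_H be the number of vertices with nonzero in-degree after a random orientation of the edges of H. Then Var(X_H) ≤ n/4. -/

import Mathlib

open Finset

/-- Expectation of a real-valued random variable `X` on a finite sample space with
probability mass function `p`. -/
noncomputable def expectation {Ω : Type*} [Fintype Ω] (p : Ω → ℝ) (X : Ω → ℝ) : ℝ :=
  ∑ ω, p ω * X ω

/-- Variance of a real-valued random variable `X` on a finite sample space with
probability mass function `p`. -/
noncomputable def finVariance {Ω : Type*} [Fintype Ω] (p : Ω → ℝ) (X : Ω → ℝ) : ℝ :=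
  expectation p (fun ω => (X ω - expectation p X) ^ 2)

/-!
Write `X_H = ∑ᵥ Iᵥ` with `Iᵥ` the indicator that `v` receives an edge, so that
`Var X_H = ∑ᵤ Var Iᵤ + ∑_{u ≠ v} Cov(Iᵤ, Iᵥ)`. Each variance is at most `1/4`. The covariances
are nonpositive: `Cov(Iᵤ, Iᵥ) = Cov(1 - Iᵤ, 1 - Iᵥ)`, and the events "no edge points to `u`",
"no edge points to `v`" are intersections over the independent edges of per-edge events that
are negatively correlated, since an `r`-set `e` satisfies
`#(e \ {u, v}) * r ≤ #(e \ {u}) * #(e \ {v})`.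
-/

section Covariance

variable {Ω : Type*} [Fintype Ω] (p : Ω → ℝ)

noncomputable def finCovariance (X Y : Ω → ℝ) : ℝ :=
  expectation p (fun ω => X ω * Y ω) - expectation p X * expectation p Y

lemma expectation_sum {ι : Type*} (s : Finset ι) (X : ι → Ω → ℝ) :
    expectation p (fun ω => ∑ i ∈ s, X i ω) = ∑ i ∈ s, expectation p (X i) := by
  simp only [expectation, mul_sum]
  exact sum_comm

lemma expectation_one_sub (hp : ∑ ω, p ω = 1) (X : Ω → ℝ) :
    expectation p (fun ω => 1 - X ω) = 1 - expectation p X := by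
  simp only [expectation, mul_sub, mul_one, sum_sub_distrib, hp]

lemma finVariance_eq_finCovariance (hp : ∑ ω, p ω = 1) (X : Ω → ℝ) :
    finVariance p X = finCovariance p X X := by
  simp only [finVariance, finCovariance, expectation]
  have expand : ∀ ω, p ω * (X ω - ∑ ω, p ω * X ω) ^ 2
      = p ω * (X ω * X ω) - 2 * (∑ ω, p ω * X ω) * (p ω * X ω) + (∑ ω, p ω * X ω) ^ 2 * p ω :=
    fun ω => by ring
  simp only [expand, sum_add_distrib, sum_sub_distrib, ← mul_sum, hp]
  ring

lemma finCovariance_sum_sum {ι κ : Type*} (s : Finset ι) (t : Finset κ)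
    (X : ι → Ω → ℝ) (Y : κ → Ω → ℝ) :
    finCovariance p (fun ω => ∑ i ∈ s, X i ω) (fun ω => ∑ j ∈ t, Y j ω)
      = ∑ i ∈ s, ∑ j ∈ t, finCovariance p (X i) (Y j) := by
  simp only [finCovariance, sum_mul_sum, expectation_sum, sum_sub_distrib]

lemma finCovariance_one_sub (hp : ∑ ω, p ω = 1) (X Y : Ω → ℝ) :
    finCovariance p (fun ω => 1 - X ω) (fun ω => 1 - Y ω) = finCovariance p X Y := by
  have expand : ∀ ω, (1 - X ω) * (1 - Y ω) = 1 - (X ω + Y ω - X ω * Y ω) := fun ω => by ring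
  simp only [finCovariance, expand, expectation_one_sub p hp]
  simp only [expectation, mul_add, mul_sub, sum_add_distrib, sum_sub_distrib]
  ring

lemma finCovariance_self_le_of_idempotent {X : Ω → ℝ} (hX : ∀ ω, X ω * X ω = X ω) :
    finCovariance p X X ≤ 1 / 4 := by
  simp only [finCovariance, hX]
  nlinarith [sq_nonneg (expectation p X - 1 / 2)]

end Covariance

lemma card_sdiff_pair_mul_card_le {V : Type*} [DecidableEq V] (s : Finset V) {u v : V}
    (huv : u ≠ v) : #(s \ {u, v}) * #s ≤ #(s \ {u}) * #(s \ {v}) := by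
  have hunion : (s \ {u}) ∪ (s \ {v}) = s := by
    rw [← sdiff_inter_distrib_right, singleton_inter_of_notMem (notMem_singleton.2 huv),
      sdiff_empty]
  have hinter : (s \ {u}) ∩ (s \ {v}) = s \ {u, v} := by
    rw [← sdiff_union_distrib, ← insert_eq]
  have hsum := card_union_add_card_inter (s \ {u}) (s \ {v})
  rw [hunion, hinter] at hsum
  have hu : #(s \ {u, v}) ≤ #(s \ {u}) := card_le_card (sdiff_subset_sdiff le_rfl (by simp))
  have hv : #(s \ {u, v}) ≤ #(s \ {v}) := card_le_card (sdiff_subset_sdiff le_rfl (by simp))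
  -- writing `a, b, c` for the cardinalities of `s \ {u}, s \ {v}, s \ {u, v}`:
  -- `#s = a + b - c`, and `a * b - c * (a + b - c) = (a - c) * (b - c)`
  nlinarith

lemma card_sdiff_pair_div_le {V : Type*} [DecidableEq V] (s : Finset V) {u v : V}
    (huv : u ≠ v) : (#(s \ {u, v}) : ℝ) / #s ≤ #(s \ {u}) / #s * (#(s \ {v}) / #s) := by
  rcases (#s).eq_zero_or_pos with hs | hs
  · simp [hs]
  rw [div_mul_div_comm, div_le_div_iff₀ (by positivity) (by positivity), ← mul_assoc]
  have hs' : (0 : ℝ) ≤ #s := Nat.cast_nonneg _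
  exact mul_le_mul_of_nonneg_right (by exact_mod_cast card_sdiff_pair_mul_card_le s huv) hs'

section Orientation

variable {V : Type*} [DecidableEq V] {m r : ℕ}

abbrev EdgeOrientation (E : Fin m → Finset V) := {f : Fin m → V // ∀ i, f i ∈ E i}

variable {E : Fin m → Finset V}

def missIndicator (S : Finset V) (f : EdgeOrientation E) : ℝ :=
  ∏ i, if f.1 i ∈ S then 0 else 1

def hitIndicator (v : V) (f : EdgeOrientation E) : ℝ := if ∃ i, f.1 i = v then 1 else 0

lemma missIndicator_mul (S T : Finset V) (f : EdgeOrientation E) :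
    missIndicator S f * missIndicator T f = missIndicator (S ∪ T) f := by
  simp only [missIndicator, ← prod_mul_distrib, mem_union]
  refine prod_congr rfl fun i _ => ?_
  split_ifs <;> simp_all

lemma one_sub_hitIndicator (v : V) (f : EdgeOrientation E) :
    1 - hitIndicator v f = missIndicator {v} f := by
  simp only [hitIndicator, missIndicator, mem_singleton]
  split_ifs with hit
  · obtain ⟨i, hi⟩ := hit
    rw [Finset.prod_eq_zero (mem_univ i) (by rw [if_pos hi]), sub_self]
  · rw [not_exists] at hit
    rw [prod_eq_one fun i _ => if_neg (hit i), sub_zero]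

variable [Fintype V]

lemma sum_edgeOrientation_prod (g : Fin m → V → ℝ) :
    ∑ f : EdgeOrientation E, ∏ i, g i (f.1 i) = ∏ i, ∑ x ∈ E i, g i x := by
  rw [prod_univ_sum]
  exact (sum_subtype _ (fun _ => Fintype.mem_piFinset) (fun f => ∏ i, g i (f i))).symm

lemma expectation_uniform_prod (g : Fin m → V → ℝ) :
    expectation (fun _ : EdgeOrientation E => (1 : ℝ) / r ^ m) (fun f => ∏ i, g i (f.1 i))
      = ∏ i, (∑ x ∈ E i, g i x) / r := by
  rw [expectation, ← mul_sum, sum_edgeOrientation_prod, prod_div_distrib, Fin.prod_const,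
    one_div_mul_eq_div]

lemma sum_uniform_weight_eq_one (hE : ∀ i, #(E i) = r) (hr : r ≠ 0) :
    ∑ _f : EdgeOrientation E, (1 : ℝ) / r ^ m = 1 := by
  have hr' : (r : ℝ) ≠ 0 := Nat.cast_ne_zero.2 hr
  simpa [expectation, hE, hr'] using expectation_uniform_prod (E := E) (r := r) (fun _ _ => 1)

lemma expectation_missIndicator (hE : ∀ i, #(E i) = r) (S : Finset V) :
    expectation (fun _ : EdgeOrientation E => (1 : ℝ) / r ^ m) (missIndicator S)
      = ∏ i, (#(E i \ S) : ℝ) / #(E i) := by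
  refine (expectation_uniform_prod fun _ x => if x ∈ S then 0 else 1).trans
    (prod_congr rfl fun i _ => ?_)
  rw [hE, sum_ite, sum_const_zero, sum_const, nsmul_one, zero_add, filter_notMem_eq_sdiff]

lemma finCovariance_hitIndicator_self_le (v : V) :
    finCovariance (fun _ : EdgeOrientation E => (1 : ℝ) / r ^ m) (hitIndicator v) (hitIndicator v)
      ≤ 1 / 4 :=
  finCovariance_self_le_of_idempotent _ fun f => by unfold hitIndicator; split_ifs <;> norm_num

lemma finCovariance_hitIndicator_nonpos (hE : ∀ i, #(E i) = r) (hr : r ≠ 0) {u v : V}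
    (huv : u ≠ v) :
    finCovariance (fun _ : EdgeOrientation E => (1 : ℝ) / r ^ m) (hitIndicator u) (hitIndicator v)
      ≤ 0 := by
  rw [← finCovariance_one_sub _ (sum_uniform_weight_eq_one hE hr)]
  simp only [one_sub_hitIndicator, finCovariance, missIndicator_mul, ← insert_eq,
    expectation_missIndicator hE, ← prod_mul_distrib, sub_nonpos]
  exact prod_le_prod (fun i _ => by positivity) fun i _ => card_sdiff_pair_div_le (E i) huv

lemma card_filter_hit_eq_sum_hitIndicator (f : EdgeOrientation E) :
    ((univ.filter fun v => ∃ i, f.1 i = v).card : ℝ) = ∑ v, hitIndicator v f := by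
  rw [card_filter, Nat.cast_sum]
  exact sum_congr rfl fun v _ => by rw [Nat.cast_ite, Nat.cast_one, Nat.cast_zero]; rfl

end Orientation

theorem variance_nonzero_indegree_le {V : Type*} [Fintype V] [DecidableEq V]
    (n m r : ℕ) (hr : 2 ≤ r)
    (hV : Fintype.card V = n)
    (E : Fin m → Finset V) (hE : ∀ i, (E i).card = r) :
    finVariance
        (fun _ : {f : Fin m → V // ∀ i, f i ∈ E i} => (1 : ℝ) / r ^ m)
        (fun f => ((Finset.univ.filter fun v => ∃ i, f.1 i = v).card : ℝ)) ≤
      (n : ℝ) / 4 := by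
  have hr0 : r ≠ 0 := by omega
  simp only [card_filter_hit_eq_sum_hitIndicator]
  rw [finVariance_eq_finCovariance _ (sum_uniform_weight_eq_one hE hr0), finCovariance_sum_sum]
  calc ∑ u, ∑ v, finCovariance _ (hitIndicator u) (hitIndicator v)
      ≤ ∑ u : V, ∑ v : V, if u = v then (1 : ℝ) / 4 else 0 := by
        gcongr with u _ v _
        split_ifs with huv
        · exact huv ▸ finCovariance_hitIndicator_self_le u
        · exact finCovariance_hitIndicator_nonpos hE hr0 huv
    _ = n / 4 := by simp [hV, div_eq_mul_inv]
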